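/- The following identity of rational functions in t, w, q holds: 1 + q^2*(t + w*q + t^2*q^2)/(1-w*q^3) + q^6*(q + q^2 + t^3)/((1-t*q^2)(1-w*q^3)) = ((1-q^2)(1-q^3)/((1-t*q^2)(1-w*q^3))) * (1 + q^2/(1-q) + q^6/((1-q)(1-q^2))). -/

import Mathlib

noncomputable section

open MvPolynomial

/-- The field of rational functions in `t`, `w` and `q` over `ℚ`. -/
abbrev F : Type := FractionRing (MvPolynomial (Fin 3) ℚ)

def t : F := algebraMap (MvPolynomial (Fin 3) ℚ) F (X 0)
def w : F := algebraMap (MvPolynomial (Fin 3) ℚ) F (X 1)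
def q : F := algebraMap (MvPolynomial (Fin 3) ℚ) F (X 2)

theorem MvPolynomial.one_sub_algebraMap_ne_zero {σ R K : Type*} [CommRing R] [Nontrivial R]
    [Field K] [Algebra (MvPolynomial σ R) K] [IsFractionRing (MvPolynomial σ R) K]
    {p : MvPolynomial σ R} (hp : constantCoeff p = 0) :
    1 - algebraMap (MvPolynomial σ R) K p ≠ 0 := by
  rw [← map_one (algebraMap (MvPolynomial σ R) K), ← map_sub, ne_eq,
    IsFractionRing.to_map_eq_zero_iff]
  intro h
  simpa [hp] using congrArg constantCoeff h

theorem stmt17 :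
    1 + q ^ 2 * (t + w * q + t ^ 2 * q ^ 2) / (1 - w * q ^ 3)
        + q ^ 6 * (q + q ^ 2 + t ^ 3) / ((1 - t * q ^ 2) * (1 - w * q ^ 3))
      = ((1 - q ^ 2) * (1 - q ^ 3) / ((1 - t * q ^ 2) * (1 - w * q ^ 3))) *
          (1 + q ^ 2 / (1 - q) + q ^ 6 / ((1 - q) * (1 - q ^ 2))) := by
  have one_sub_ne_zero (p : MvPolynomial (Fin 3) ℚ) (hp : constantCoeff p = 0) :
      1 - algebraMap (MvPolynomial (Fin 3) ℚ) F p ≠ 0 :=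
    one_sub_algebraMap_ne_zero hp
  -- The denominators are written in the monomial order that `field_simp` normalizes to.
  have hwq3 : 1 - q ^ 3 * w ≠ 0 := by
    have h := one_sub_ne_zero (X 2 ^ 3 * X 1) (by simp)
    rwa [map_mul, map_pow] at h
  have htq2 : 1 - q ^ 2 * t ≠ 0 := by
    have h := one_sub_ne_zero (X 2 ^ 2 * X 0) (by simp)
    rwa [map_mul, map_pow] at h
  have hq : 1 - q ≠ 0 := one_sub_ne_zero (X 2) (by simp)
  have hq2 : 1 - q ^ 2 ≠ 0 := by
    have h := one_sub_ne_zero (X 2 ^ 2) (by simp)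
    rwa [map_pow] at h
  field_simp
  ring

end
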